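/- The map g : 𝔻 → c₀, g(z) = (zⁿ)_{n≥1}, is a proper map into the open unit ball of c₀: if (z_k) ⊂ 𝔻 is a sequence with |z_k| → 1, then (g(z_k)) has no subsequence converging in c₀. -/
import Mathlib


open Filter Topology

/-- The map `g : 𝔻 → c₀`, `g z = (zⁿ)_{n ≥ 1}`, is proper into the open unit ball of `c₀`:
if `(z k)` is a sequence in the disc with `‖z k‖ → 1`, then `(g (z k))` has no subsequence
converging in `c₀` (uniform convergence of the sequences to a null sequence is impossible). -/
theorem stmt1 (z : ℕ → ℂ) (hz : ∀ k, ‖z k‖ < 1)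
    (hlim : Tendsto (fun k => ‖z k‖) atTop (𝓝 1)) :
    ¬ ∃ (φ : ℕ → ℕ) (a : ℕ → ℂ), StrictMono φ ∧ Tendsto a atTop (𝓝 0) ∧
      TendstoUniformly (fun k n => z (φ k) ^ (n + 1)) a atTop := by
  rintro ⟨φ, a, hφ, ha, hu⟩
  obtain ⟨N, hN⟩ := Metric.tendsto_atTop.1 ha (1/4) (by norm_num)
  rw [Metric.tendstoUniformly_iff] at hu
  have h1 := hu (1/4) (by norm_num)
  have h2 : Tendsto (fun k => ‖z (φ k)‖ ^ (N + 1)) atTop (𝓝 1) := by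
    simpa using (hlim.comp hφ.tendsto_atTop).pow (N + 1)
  have h3 : ∀ᶠ k in atTop, (1:ℝ)/2 < ‖z (φ k)‖ ^ (N + 1) :=
    h2.eventually (eventually_gt_nhds (by norm_num))
  obtain ⟨k, hk1, hk2⟩ := (h1.and h3).exists
  have hd : dist (a N) (z (φ k) ^ (N + 1)) < 1/4 := hk1 N
  have hN' : dist (a N) 0 < 1/4 := hN N le_rfl
  have : ‖z (φ k) ^ (N + 1)‖ < 1/2 := by
    calc ‖z (φ k) ^ (N + 1)‖ ≤ ‖z (φ k) ^ (N + 1) - a N‖ + ‖a N‖ := by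
          simpa using norm_sub_le_norm_sub_add_norm_sub (z (φ k) ^ (N + 1)) (a N) 0
      _ < 1/4 + 1/4 := by
          rw [dist_eq_norm, norm_sub_rev] at hd
          rw [dist_zero_right] at hN'
          exact add_lt_add hd hN'
      _ = 1/2 := by norm_num
  rw [norm_pow] at this
  linarith
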